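/- arXiv:1610.09489 — 5 statements merged into one kernel-verified Lean document; each statement's English description precedes it below -/
import Mathlib

section
/- For every positive integer ℓ there exists a 3-way 3-homogeneous (9ℓ,3,2) Steiner trade of volume 9ℓ. -/
open Finset

/-- The foundation of a collection of block systems: all points occurring in some block. -/
def foundT {μ : ℕ} (T : Fin μ → Finset (Finset ℕ)) : Finset ℕ :=
  (Finset.univ.biUnion T).biUnion id

/-- `T` is a μ-way (v,k,t) trade of volume `m` on the point set `V`:
μ pairwise disjoint collections of `m` blocks (k-subsets of `V`) such that every
t-subset of `V` occurs in the same number of blocks of each collection. -/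
def IsMuTrade (μ : ℕ) (V : Finset ℕ) (k t m : ℕ)
    (T : Fin μ → Finset (Finset ℕ)) : Prop :=
  0 < m ∧
  (∀ i, (T i).card = m) ∧
  (∀ i, ∀ b ∈ T i, b ⊆ V ∧ b.card = k) ∧
  (∀ i j, i ≠ j → Disjoint (T i) (T j)) ∧
  (∀ s : Finset ℕ, s ⊆ V → s.card = t → ∀ i j,
    ((T i).filter (fun b => s ⊆ b)).card =
      ((T j).filter (fun b => s ⊆ b)).card)

/-- Steiner condition: every t-subset of the foundation occurs at most once in each `T i`. -/
def IsSteinerT {μ : ℕ} (t : ℕ) (T : Fin μ → Finset (Finset ℕ)) : Prop :=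
  ∀ i, ∀ s : Finset ℕ, s ⊆ foundT T → s.card = t →
    ((T i).filter (fun b => s ⊆ b)).card ≤ 1

/-- d-homogeneity: every element of the foundation occurs in exactly `d` blocks of each `T i`. -/
def IsHomog {μ : ℕ} (d : ℕ) (T : Fin μ → Finset (Finset ℕ)) : Prop :=
  ∀ x ∈ foundT T, ∀ i, ((T i).filter (fun b => x ∈ b)).card = d

/-- A 3-way d-homogeneous (v,3,2) Steiner trade of volume `m`. -/
def Is3Steiner (d v m : ℕ) (T : Fin 3 → Finset (Finset ℕ)) : Prop :=
  IsMuTrade 3 (foundT T) 3 2 m T ∧ IsSteinerT 2 T ∧ IsHomog d T ∧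
    (foundT T).card = v

def blk (i j r c : ℕ) : Finset ℕ := {9*j+r, 9*j+3+c, 9*j+6+(r+c+i)%3}

def Tt (ℓ i : ℕ) : Finset (Finset ℕ) :=
  (Finset.range ℓ ×ˢ (Finset.range 3 ×ˢ Finset.range 3)).image
    (fun p => blk i p.1 p.2.1 p.2.2)

lemma mem_blk {x i j r c : ℕ} :
    x ∈ blk i j r c ↔ x = 9*j+r ∨ x = 9*j+3+c ∨ x = 9*j+6+(r+c+i)%3 := by
  simp [blk]

lemma mem_Tt {ℓ i : ℕ} {b : Finset ℕ} :
    b ∈ Tt ℓ i ↔ ∃ j, j < ℓ ∧ ∃ r, r < 3 ∧ ∃ c, c < 3 ∧ b = blk i j r c := by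
  simp only [Tt, Finset.mem_image, Finset.mem_product, Finset.mem_range]
  constructor
  · rintro ⟨⟨j, r, c⟩, ⟨hj, hr, hc⟩, rfl⟩
    exact ⟨j, hj, r, hr, c, hc, rfl⟩
  · rintro ⟨j, hj, r, hr, c, hc, rfl⟩
    exact ⟨⟨j, r, c⟩, ⟨hj, hr, hc⟩, rfl⟩

lemma blk_decode {x i j r c : ℕ} (hi : i < 3) (hr : r < 3) (hc : c < 3)
    (hx : x ∈ blk i j r c) :
    x / 9 = j ∧ ((x % 9 < 3 ∧ r = x % 9) ∨ (3 ≤ x % 9 ∧ x % 9 < 6 ∧ c = x % 9 - 3) ∨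
      (6 ≤ x % 9 ∧ x % 9 < 9 ∧ (r+c+i) % 3 = x % 9 - 6)) := by
  rw [mem_blk] at hx
  omega

lemma blk_inj {i i' j r c j' r' c' : ℕ} (hr : r<3) (hc : c<3)
    (hr' : r'<3) (hc' : c'<3) (hi : i < 3) (hi' : i' < 3)
    (h : blk i j r c = blk i' j' r' c') :
    j = j' ∧ r = r' ∧ c = c' ∧ i = i' := by
  have h1 : (9*j+r) ∈ blk i' j' r' c' := by rw [← h, mem_blk]; left; rfl
  have h2 : (9*j+3+c) ∈ blk i' j' r' c' := by rw [← h, mem_blk]; right; left; rfl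
  have h3 : (9*j+6+(r+c+i)%3) ∈ blk i' j' r' c' := by rw [← h, mem_blk]; right; right; rfl
  rw [mem_blk] at h1 h2 h3
  omega

lemma unique_blk {ℓ i : ℕ} (hi : i < 3) {s b b' : Finset ℕ}
    (hs : s.card = 2) (hb : b ∈ Tt ℓ i) (hb' : b' ∈ Tt ℓ i)
    (hsb : s ⊆ b) (hsb' : s ⊆ b') : b = b' := by
  obtain ⟨x, y, hxy, rfl⟩ := Finset.card_eq_two.1 hs
  obtain ⟨j, hj, r, hr, c, hc, rfl⟩ := mem_Tt.1 hb
  obtain ⟨j', hj', r', hr', c', hc', rfl⟩ := mem_Tt.1 hb'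
  have hx := blk_decode hi hr hc (hsb (Finset.mem_insert_self x {y}))
  have hy := blk_decode hi hr hc (hsb (Finset.mem_insert_of_mem (Finset.mem_singleton_self y)))
  have hx' := blk_decode hi hr' hc' (hsb' (Finset.mem_insert_self x {y}))
  have hy' := blk_decode hi hr' hc' (hsb' (Finset.mem_insert_of_mem (Finset.mem_singleton_self y)))
  have hxy9 : x ≠ y := hxy
  have key : j = j' ∧ r = r' ∧ c = c' := by omega
  obtain ⟨rfl, rfl, rfl⟩ := key
  rfl

lemma cover_types {x y i j r c : ℕ} (hi : i < 3) (hr : r < 3) (hc : c < 3)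
    (hx : x ∈ blk i j r c) (hy : y ∈ blk i j r c) (hxy : x ≠ y) :
    x / 9 = y / 9 ∧ x % 9 / 3 ≠ y % 9 / 3 := by
  have h1 := blk_decode hi hr hc hx
  have h2 := blk_decode hi hr hc hy
  omega

lemma exists_blk {ℓ i x y : ℕ} (hi : i < 3) (hx : x < 9*ℓ) (hy : y < 9*ℓ)
    (hj : x / 9 = y / 9) (ht : x % 9 / 3 ≠ y % 9 / 3) :
    ∃ b ∈ Tt ℓ i, x ∈ b ∧ y ∈ b := by
  wlog hlt : x % 9 / 3 < y % 9 / 3 with H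
  · obtain ⟨b, hb, h1, h2⟩ := H hi hy hx hj.symm (Ne.symm ht) (by omega)
    exact ⟨b, hb, h2, h1⟩
  have hjl : x / 9 < ℓ := by omega
  rcases Nat.lt_or_ge (x % 9) 3 with hx3 | hx3
  · rcases Nat.lt_or_ge (y % 9) 6 with hy6 | hy6
    · -- types 0,1
      refine ⟨blk i (x/9) (x % 9) (y % 9 - 3), mem_Tt.2 ⟨x/9, hjl, _, by omega, _, by omega, rfl⟩, ?_, ?_⟩
      · rw [mem_blk]; omega
      · rw [mem_blk]; omega
    · -- types 0,2
      refine ⟨blk i (x/9) (x % 9) ((y % 9 - x % 9 - i) % 3), mem_Tt.2 ⟨x/9, hjl, _, by omega, _, by omega, rfl⟩, ?_, ?_⟩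
      · rw [mem_blk]; omega
      · rw [mem_blk]; omega
  · -- types 1,2
    refine ⟨blk i (x/9) ((y % 9 - (x % 9 - 3) - i) % 3) (x % 9 - 3), mem_Tt.2 ⟨x/9, hjl, _, by omega, _, by omega, rfl⟩, ?_, ?_⟩
    · rw [mem_blk]; omega
    · rw [mem_blk]; omega

lemma pair_count {ℓ i i' : ℕ} (hi : i < 3) (hi' : i' < 3) {s : Finset ℕ}
    (hs : s.card = 2) :
    ((Tt ℓ i).filter (fun b => s ⊆ b)).card =
      ((Tt ℓ i').filter (fun b => s ⊆ b)).card := by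
  have hle : ∀ k, k < 3 → ((Tt ℓ k).filter (fun b => s ⊆ b)).card ≤ 1 := by
    intro k hk
    apply Finset.card_le_one.2
    intro a ha b hb
    rw [Finset.mem_filter] at ha hb
    exact unique_blk hk hs ha.1 hb.1 ha.2 hb.2
  have hne : ∀ k k', k < 3 → k' < 3 →
      ((Tt ℓ k).filter (fun b => s ⊆ b)).Nonempty →
      ((Tt ℓ k').filter (fun b => s ⊆ b)).Nonempty := by
    intro k k' hk hk' ⟨b, hb⟩
    rw [Finset.mem_filter] at hb
    obtain ⟨x, y, hxy, rfl⟩ := Finset.card_eq_two.1 hs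
    obtain ⟨j, hj, r, hr, c, hc, rfl⟩ := mem_Tt.1 hb.1
    have hxm : x ∈ blk k j r c := hb.2 (Finset.mem_insert_self x {y})
    have hym : y ∈ blk k j r c := hb.2 (Finset.mem_insert_of_mem (Finset.mem_singleton_self y))
    have hct := cover_types hk hr hc hxm hym hxy
    have hxb : x < 9*ℓ := by
      have := blk_decode hk hr hc hxm; omega
    have hyb : y < 9*ℓ := by
      have := blk_decode hk hr hc hym; omega
    obtain ⟨b', hb', h1, h2⟩ := exists_blk hk' hxb hyb hct.1 hct.2
    exact ⟨b', Finset.mem_filter.2 ⟨hb', by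
      intro z hz
      rcases Finset.mem_insert.1 hz with rfl | hz
      · exact h1
      · rw [Finset.mem_singleton] at hz; subst hz; exact h2⟩⟩
  have h1 := hle i hi
  have h2 := hle i' hi'
  have h3 : ((Tt ℓ i).filter (fun b => s ⊆ b)).card ≠ 0 ↔
      ((Tt ℓ i').filter (fun b => s ⊆ b)).card ≠ 0 := by
    have e1 := Finset.card_pos (s := (Tt ℓ i).filter (fun b => s ⊆ b))
    have e2 := Finset.card_pos (s := (Tt ℓ i').filter (fun b => s ⊆ b))
    constructor
    · intro h; have := hne i i' hi hi' (e1.1 (by omega)); have := e2.2 this; omega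
    · intro h; have := hne i' i hi' hi (e2.1 (by omega)); have := e1.2 this; omega
  omega

lemma point_count {ℓ i x : ℕ} (hi : i < 3) (hx : x < 9*ℓ) :
    ((Tt ℓ i).filter (fun b => x ∈ b)).card = 3 := by
  have hj : x / 9 < ℓ := by omega
  rcases Nat.lt_or_ge (x % 9) 3 with h3 | h3
  · have := Finset.card_bij
      (fun (a : ℕ) (_ : a ∈ Finset.range 3) => blk i (x/9) (x % 9) a)
      (t := (Tt ℓ i).filter (fun b => x ∈ b)) ?_ ?_ ?_
    · rw [Finset.card_range] at this; exact this.symm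
    · intro a ha
      rw [Finset.mem_range] at ha
      exact Finset.mem_filter.2 ⟨mem_Tt.2 ⟨x/9, hj, _, by omega, _, ha, rfl⟩,
        mem_blk.2 (by omega)⟩
    · intro a ha b hb hab
      rw [Finset.mem_range] at ha hb
      have := blk_inj (by omega) ha (by omega) hb hi hi hab
      omega
    · intro b hb
      rw [Finset.mem_filter] at hb
      obtain ⟨j, hjl, r, hr, c, hc, rfl⟩ := mem_Tt.1 hb.1
      have hd := blk_decode hi hr hc hb.2
      refine ⟨c, Finset.mem_range.2 hc, ?_⟩
      have h1 : x / 9 = j := hd.1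
      have h2 : x % 9 = r := by omega
      simp only [h1, h2]
  rcases Nat.lt_or_ge (x % 9) 6 with h6 | h6
  · have := Finset.card_bij
      (fun (a : ℕ) (_ : a ∈ Finset.range 3) => blk i (x/9) a (x % 9 - 3))
      (t := (Tt ℓ i).filter (fun b => x ∈ b)) ?_ ?_ ?_
    · rw [Finset.card_range] at this; exact this.symm
    · intro a ha
      rw [Finset.mem_range] at ha
      exact Finset.mem_filter.2 ⟨mem_Tt.2 ⟨x/9, hj, _, ha, _, by omega, rfl⟩,
        mem_blk.2 (by omega)⟩
    · intro a ha b hb hab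
      rw [Finset.mem_range] at ha hb
      have := blk_inj ha (by omega) hb (by omega) hi hi hab
      omega
    · intro b hb
      rw [Finset.mem_filter] at hb
      obtain ⟨j, hjl, r, hr, c, hc, rfl⟩ := mem_Tt.1 hb.1
      have hd := blk_decode hi hr hc hb.2
      refine ⟨r, Finset.mem_range.2 hr, ?_⟩
      have h1 : x / 9 = j := hd.1
      have h2 : x % 9 - 3 = c := by omega
      simp only [h1, h2]
  · have := Finset.card_bij
      (fun (a : ℕ) (_ : a ∈ Finset.range 3) => blk i (x/9) a ((x % 9 + 6 - a - i) % 3))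
      (t := (Tt ℓ i).filter (fun b => x ∈ b)) ?_ ?_ ?_
    · rw [Finset.card_range] at this; exact this.symm
    · intro a ha
      rw [Finset.mem_range] at ha
      exact Finset.mem_filter.2 ⟨mem_Tt.2 ⟨x/9, hj, _, ha, _, by omega, rfl⟩,
        mem_blk.2 (by omega)⟩
    · intro a ha b hb hab
      rw [Finset.mem_range] at ha hb
      have := blk_inj ha (by omega) hb (by omega) hi hi hab
      omega
    · intro b hb
      rw [Finset.mem_filter] at hb
      obtain ⟨j, hjl, r, hr, c, hc, rfl⟩ := mem_Tt.1 hb.1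
      have hd := blk_decode hi hr hc hb.2
      refine ⟨r, Finset.mem_range.2 hr, ?_⟩
      have h1 : x / 9 = j := hd.1
      have h2 : (x % 9 + 6 - r - i) % 3 = c := by omega
      simp only [h1, h2]

lemma blk_card {i j r c : ℕ} (hr : r < 3) (hc : c < 3) : (blk i j r c).card = 3 := by
  rw [blk]
  rw [Finset.card_insert_of_notMem (by
    simp only [Finset.mem_insert, Finset.mem_singleton]; omega)]
  rw [Finset.card_insert_of_notMem (by
    simp only [Finset.mem_singleton]; omega)]
  rfl

lemma found_eq (ℓ : ℕ) :
    foundT (fun i : Fin 3 => Tt ℓ i.val) = Finset.range (9*ℓ) := by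
  ext x
  simp only [foundT, Finset.mem_biUnion, Finset.mem_univ, true_and, id,
    Finset.mem_range, exists_exists_and_eq_and]
  constructor
  · rintro ⟨b, ⟨i, hb⟩, hx⟩
    obtain ⟨j, hj, r, hr, c, hc, rfl⟩ := mem_Tt.1 hb
    have := blk_decode i.isLt hr hc hx
    omega
  · intro hx
    have hj : x / 9 < ℓ := by omega
    rcases Nat.lt_or_ge (x % 9) 3 with h3 | h3
    · exact ⟨blk 0 (x/9) (x % 9) 0, ⟨0, mem_Tt.2 ⟨x/9, hj, _, by omega, _, by omega, rfl⟩⟩,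
        mem_blk.2 (by omega)⟩
    rcases Nat.lt_or_ge (x % 9) 6 with h6 | h6
    · exact ⟨blk 0 (x/9) 0 (x % 9 - 3), ⟨0, mem_Tt.2 ⟨x/9, hj, _, by omega, _, by omega, rfl⟩⟩,
        mem_blk.2 (by omega)⟩
    · exact ⟨blk 0 (x/9) 0 (x % 9 - 6), ⟨0, mem_Tt.2 ⟨x/9, hj, _, by omega, _, by omega, rfl⟩⟩,
        mem_blk.2 (by omega)⟩

lemma Tt_card {ℓ i : ℕ} (hi : i < 3) : (Tt ℓ i).card = 9 * ℓ := by
  rw [Tt, Finset.card_image_of_injOn]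
  · simp only [Finset.card_product, Finset.card_range]; ring
  · rintro ⟨j, r, c⟩ h ⟨j', r', c'⟩ h' hab
    simp only [Finset.mem_coe, Finset.mem_product, Finset.mem_range] at h h'
    have := blk_inj h.2.1 h.2.2 h'.2.1 h'.2.2 hi hi hab
    simp only [Prod.mk.injEq]
    exact ⟨this.1, this.2.1, this.2.2.1⟩


/-- for every positive ℓ there is a 3-way 3-homogeneous
(9ℓ,3,2) Steiner trade of volume 9ℓ. -/
theorem stmt5 (ℓ : ℕ) (hℓ : 0 < ℓ) :
    ∃ T : Fin 3 → Finset (Finset ℕ), Is3Steiner 3 (9 * ℓ) (9 * ℓ) T := by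
  refine ⟨fun i : Fin 3 => Tt ℓ i.val, ?_, ?_, ?_, ?_⟩
  · refine ⟨by omega, fun i => Tt_card i.isLt, ?_, ?_, ?_⟩
    · intro i b hb
      obtain ⟨j, hj, r, hr, c, hc, rfl⟩ := mem_Tt.1 hb
      constructor
      · rw [found_eq]
        intro z hz
        rw [mem_blk] at hz
        rw [Finset.mem_range]
        omega
      · exact blk_card hr hc
    · intro i j hij
      rw [Finset.disjoint_left]
      intro b hb hb'
      obtain ⟨j1, hj1, r1, hr1, c1, hc1, rfl⟩ := mem_Tt.1 hb
      obtain ⟨j2, hj2, r2, hr2, c2, hc2, heq⟩ := mem_Tt.1 hb'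
      have := blk_inj hr1 hc1 hr2 hc2 i.isLt j.isLt heq
      exact hij (Fin.ext this.2.2.2)
    · intro s hsV hs i j
      exact pair_count i.isLt j.isLt hs
  · intro i s hsV hs
    apply Finset.card_le_one.2
    intro a ha b hb
    rw [Finset.mem_filter] at ha hb
    exact unique_blk i.isLt hs ha.1 hb.1 ha.2 hb.2
  · intro x hx i
    rw [found_eq, Finset.mem_range] at hx
    exact point_count i.isLt hx
  · rw [found_eq, Finset.card_range]
end

section
/- Up to isomorphism (relabeling of the 6 foundation elements), there are exactly two 3-way (v,2,1) Steiner trades of volume 3. Representatives are: T_1={12,34,56}, T_2={13,26,45}, T_3={14,25,36}; and T_1={12,34,56}, T_2={13,26,45}, T_3={15,24,36}. -/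
open Finset

/-- Isomorphism of 3-way trades: a relabeling of the points together with a
permutation of the three collections. -/
def TradeIso (S T : Fin 3 → Finset (Finset ℕ)) : Prop :=
  ∃ f : ℕ → ℕ, Function.Injective f ∧ ∃ σ : Equiv.Perm (Fin 3),
    ∀ i, (S i).image (Finset.image f) = T (σ i)

/-- First representative: T₁={12,34,56}, T₂={13,26,45}, T₃={14,25,36}. -/
def repA : Fin 3 → Finset (Finset ℕ) :=
  ![{{1,2},{3,4},{5,6}}, {{1,3},{2,6},{4,5}}, {{1,4},{2,5},{3,6}}]

/-- Second representative: T₁={12,34,56}, T₂={13,26,45}, T₃={15,24,36}. -/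
def repB : Fin 3 → Finset (Finset ℕ) :=
  ![{{1,2},{3,4},{5,6}}, {{1,3},{2,6},{4,5}}, {{1,5},{2,4},{3,6}}]

/-! ### Auxiliary machinery -/

set_option maxRecDepth 100000
set_option maxHeartbeats 4000000
set_option synthInstance.maxHeartbeats 2000000
set_option synthInstance.maxSize 4000

/-- The 15 perfect matchings on `{1,…,6}`. -/
def MLl : List (Finset (Finset ℕ)) := [{{1,2},{3,4},{5,6}}, {{1,2},{3,5},{4,6}}, {{1,2},{3,6},{4,5}}, {{1,3},{2,4},{5,6}}, {{1,3},{2,5},{4,6}}, {{1,3},{2,6},{4,5}}, {{1,4},{2,3},{5,6}}, {{1,4},{2,5},{3,6}}, {{1,4},{2,6},{3,5}}, {{1,5},{2,3},{4,6}}, {{1,5},{2,4},{3,6}}, {{1,5},{2,6},{3,4}}, {{1,6},{2,3},{4,5}}, {{1,6},{2,4},{3,5}}, {{1,6},{2,5},{3,4}}]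

/-- The 48 permutations of `[1,…,6]` stabilizing the matching {12,34,56}. -/
def perms48 : List (List ℕ) := [[1,2,3,4,5,6], [1,2,3,4,6,5], [1,2,4,3,5,6], [1,2,4,3,6,5], [1,2,5,6,3,4], [1,2,5,6,4,3], [1,2,6,5,3,4], [1,2,6,5,4,3], [2,1,3,4,5,6], [2,1,3,4,6,5], [2,1,4,3,5,6], [2,1,4,3,6,5], [2,1,5,6,3,4], [2,1,5,6,4,3], [2,1,6,5,3,4], [2,1,6,5,4,3], [3,4,1,2,5,6], [3,4,1,2,6,5], [3,4,2,1,5,6], [3,4,2,1,6,5], [3,4,5,6,1,2], [3,4,5,6,2,1], [3,4,6,5,1,2], [3,4,6,5,2,1], [4,3,1,2,5,6], [4,3,1,2,6,5], [4,3,2,1,5,6], [4,3,2,1,6,5], [4,3,5,6,1,2], [4,3,5,6,2,1], [4,3,6,5,1,2], [4,3,6,5,2,1], [5,6,1,2,3,4], [5,6,1,2,4,3], [5,6,2,1,3,4], [5,6,2,1,4,3], [5,6,3,4,1,2], [5,6,3,4,2,1], [5,6,4,3,1,2], [5,6,4,3,2,1], [6,5,1,2,3,4], [6,5,1,2,4,3],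 [6,5,2,1,3,4], [6,5,2,1,4,3], [6,5,3,4,1,2], [6,5,3,4,2,1], [6,5,4,3,1,2], [6,5,4,3,2,1]]

def pApp (l : List ℕ) (x : ℕ) : ℕ := if 1 ≤ x ∧ x ≤ 6 then l.getD (x-1) 0 else x

def pSet (l : List ℕ) (M : Finset (Finset ℕ)) : Finset (Finset ℕ) :=
  M.image (Finset.image (pApp l))

def C0 : Finset (Finset ℕ) := {{1,2},{3,4},{5,6}}
def CX : Finset (Finset ℕ) := {{1,3},{2,6},{4,5}}
def CA : Finset (Finset ℕ) := {{1,4},{2,5},{3,6}}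
def CB : Finset (Finset ℕ) := {{1,5},{2,4},{3,6}}

lemma memML : ∀ M ∈ (({1,2,3,4,5,6} : Finset ℕ).powersetCard 2).powersetCard 3,
    (∀ b ∈ M, ∀ c ∈ M, b ≠ c → Disjoint b c) → M ∈ MLl := by decide

lemma bigD : ∀ M2 ∈ MLl, ∀ M3 ∈ MLl, C0 ∩ M2 = ∅ → C0 ∩ M3 = ∅ → M2 ∩ M3 = ∅ →
    ∃ l ∈ perms48, pSet l C0 = C0 ∧
      ((pSet l M2 = CX ∧ pSet l M3 = CA) ∨ (pSet l M2 = CA ∧ pSet l M3 = CX) ∨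
       (pSet l M2 = CX ∧ pSet l M3 = CB) ∨ (pSet l M2 = CB ∧ pSet l M3 = CX)) := by decide

lemma permsProp : ∀ l ∈ perms48, l.length = 6 ∧ l.Nodup ∧ ∀ x ∈ l, 1 ≤ x ∧ x ≤ 6 := by decide

lemma pApp_inj {l : List ℕ} (hlen : l.length = 6) (hnd : l.Nodup)
    (hmem : ∀ x ∈ l, 1 ≤ x ∧ x ≤ 6) : Function.Injective (pApp l) := by
  intro x y h
  unfold pApp at h
  by_cases hx : 1 ≤ x ∧ x ≤ 6 <;> by_cases hy : 1 ≤ y ∧ y ≤ 6 <;>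
    simp only [hx, hy, if_true, if_false, if_pos, if_neg, not_false_iff] at h
  · have hx' : x - 1 < l.length := by omega
    have hy' : y - 1 < l.length := by omega
    rw [List.getD_eq_getElem _ _ hx', List.getD_eq_getElem _ _ hy'] at h
    have := (List.Nodup.getElem_inj_iff hnd).mp h
    omega
  · have hx' : x - 1 < l.length := by omega
    rw [List.getD_eq_getElem _ _ hx'] at h
    have hyl : y ∈ l := h ▸ List.getElem_mem hx'
    have := hmem y hyl
    omega
  · have hy' : y - 1 < l.length := by omega
    rw [List.getD_eq_getElem _ _ hy'] at h
    have hxl : x ∈ l := h ▸ List.getElem_mem hy'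
    have := hmem x hxl
    omega
  · exact h

/-- In a Steiner (v,2,1) trade of volume 3, every foundation point lies in exactly one
block of each collection. -/
lemma count_one (T : Fin 3 → Finset (Finset ℕ)) (hT : IsMuTrade 3 (foundT T) 2 1 3 T)
    (hS : IsSteinerT 1 T) :
    ∀ x ∈ foundT T, ∀ i, ((T i).filter (fun b => x ∈ b)).card = 1 := by
  intro x hx i
  obtain ⟨-, -, -, -, hcnt⟩ := hT
  have hfil : ∀ j : Fin 3, (T j).filter (fun b => ({x} : Finset ℕ) ⊆ b)
      = (T j).filter (fun b => x ∈ b) := by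
    intro j; apply Finset.filter_congr; intro b _; simp [Finset.singleton_subset_iff]
  obtain ⟨i0, b, hbi0, hxb⟩ : ∃ i0 b, b ∈ T i0 ∧ x ∈ b := by
    simp only [foundT, Finset.mem_biUnion, Finset.mem_univ, true_and, id] at hx
    obtain ⟨b, ⟨i0, hb⟩, hxb⟩ := hx
    exact ⟨i0, b, hb, hxb⟩
  have hxf : ({x} : Finset ℕ) ⊆ foundT T := Finset.singleton_subset_iff.mpr hx
  have h1 : 0 < ((T i0).filter (fun b => x ∈ b)).card :=
    Finset.card_pos.mpr ⟨b, Finset.mem_filter.mpr ⟨hbi0, hxb⟩⟩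
  have hle := hS i0 {x} hxf (Finset.card_singleton x)
  have heq := hcnt {x} hxf (Finset.card_singleton x) i i0
  rw [hfil, hfil] at heq
  rw [hfil] at hle
  omega

lemma blocks_disj (T : Fin 3 → Finset (Finset ℕ)) (hT : IsMuTrade 3 (foundT T) 2 1 3 T)
    (hS : IsSteinerT 1 T) :
    ∀ i, ∀ b1 ∈ T i, ∀ b2 ∈ T i, b1 ≠ b2 → Disjoint b1 b2 := by
  intro i b1 hb1 b2 hb2 hne
  rw [Finset.disjoint_left]
  intro x hx1 hx2
  have hxf : x ∈ foundT T := (hT.2.2.1 i b1 hb1).1 hx1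
  have hco := count_one T hT hS x hxf i
  have hsub : ({b1, b2} : Finset (Finset ℕ)) ⊆ (T i).filter (fun b => x ∈ b) := by
    intro c hc
    rcases Finset.mem_insert.mp hc with rfl | hc
    · exact Finset.mem_filter.mpr ⟨hb1, hx1⟩
    · rw [Finset.mem_singleton.mp hc]; exact Finset.mem_filter.mpr ⟨hb2, hx2⟩
  have := Finset.card_le_card hsub
  rw [Finset.card_pair hne] at this
  omega

/-- The bipartition classes of the union of repB's blocks. -/
lemma EBedges : ∀ e ∈ ({{1,2},{3,4},{5,6},{1,3},{2,6},{4,5},{1,5},{2,4},{3,6}} :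
      Finset (Finset ℕ)), ∀ a ∈ e, ∀ b ∈ e, a ≠ b →
      ((a = 1 ∨ a = 4 ∨ a = 6) ↔ ¬(b = 1 ∨ b = 4 ∨ b = 6)) := by decide

lemma repB_sub : ∀ j : Fin 3, repB j ⊆
    ({{1,2},{3,4},{5,6},{1,3},{2,6},{4,5},{1,5},{2,4},{3,6}} : Finset (Finset ℕ)) := by decide

/-- up to isomorphism there are exactly two 3-way (v,2,1) Steiner
trades of volume 3, with the given representatives. -/
theorem stmt7 :
    (IsMuTrade 3 (foundT repA) 2 1 3 repA ∧ IsSteinerT 1 repA) ∧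
    (IsMuTrade 3 (foundT repB) 2 1 3 repB ∧ IsSteinerT 1 repB) ∧
    ¬ TradeIso repA repB ∧
    (∀ T : Fin 3 → Finset (Finset ℕ),
      IsMuTrade 3 (foundT T) 2 1 3 T → IsSteinerT 1 T →
        TradeIso T repA ∨ TradeIso T repB) := by
  have hfA : foundT repA = {1,2,3,4,5,6} := by decide
  have hfB : foundT repB = {1,2,3,4,5,6} := by decide
  refine ⟨⟨⟨by norm_num, by decide, by decide, ?_, ?_⟩, ?_⟩,
          ⟨⟨by norm_num, by decide, by decide, ?_, ?_⟩, ?_⟩, ?_, ?_⟩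
  · simp only [ne_eq, Finset.disjoint_iff_inter_eq_empty]; decide
  · intro s hsub hcard
    obtain ⟨x, rfl⟩ := Finset.card_eq_one.mp hcard
    rw [hfA] at hsub
    have hx := Finset.singleton_subset_iff.mp hsub
    fin_cases hx <;> decide
  · intro i s hsub hcard
    obtain ⟨x, rfl⟩ := Finset.card_eq_one.mp hcard
    rw [hfA] at hsub
    have hx := Finset.singleton_subset_iff.mp hsub
    revert i; fin_cases hx <;> decide
  · simp only [ne_eq, Finset.disjoint_iff_inter_eq_empty]; decide
  · intro s hsub hcard
    obtain ⟨x, rfl⟩ := Finset.card_eq_one.mp hcard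
    rw [hfB] at hsub
    have hx := Finset.singleton_subset_iff.mp hsub
    fin_cases hx <;> decide
  · intro i s hsub hcard
    obtain ⟨x, rfl⟩ := Finset.card_eq_one.mp hcard
    rw [hfB] at hsub
    have hx := Finset.singleton_subset_iff.mp hsub
    revert i; fin_cases hx <;> decide
  · -- repA ≄ repB : repA contains the triangle {1,3},{3,4},{1,4}, repB is bipartite
    rintro ⟨f, hf, σ, h⟩
    have key : ∀ (k : Fin 3) (x y : ℕ), ({x, y} : Finset ℕ) ∈ repA k →
        ({f x, f y} : Finset ℕ) ∈
          ({{1,2},{3,4},{5,6},{1,3},{2,6},{4,5},{1,5},{2,4},{3,6}} : Finset (Finset ℕ)) := by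
      intro k x y hxy
      have h1 : Finset.image f {x, y} ∈ (repA k).image (Finset.image f) :=
        Finset.mem_image_of_mem _ hxy
      rw [h k] at h1
      have h2 : Finset.image f ({x, y} : Finset ℕ) = {f x, f y} := by
        simp [Finset.image_insert]
      rw [h2] at h1
      exact repB_sub (σ k) h1
    have e1 := key 0 3 4 (by decide)
    have e2 := key 1 1 3 (by decide)
    have e3 := key 2 1 4 (by decide)
    have d34 : f 3 ≠ f 4 := fun hh => by norm_num at hf; exact absurd (hf hh) (by norm_num)
    have d13 : f 1 ≠ f 3 := fun hh => by norm_num at hf; exact absurd (hf hh) (by norm_num)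
    have d14 : f 1 ≠ f 4 := fun hh => by norm_num at hf; exact absurd (hf hh) (by norm_num)
    have k1 := EBedges _ e1 (f 3) (by simp) (f 4) (by simp) d34
    have k2 := EBedges _ e2 (f 1) (by simp) (f 3) (by simp) d13
    have k3 := EBedges _ e3 (f 1) (by simp) (f 4) (by simp) d14
    tauto
  · -- classification
    intro T hT hS
    obtain ⟨-, hcard3, hblocks, hdisjC, -⟩ := id hT
    have hbd := blocks_disj T hT hS
    obtain ⟨B1, B2, B3, h12, h13, h23, hT0⟩ := Finset.card_eq_three.mp (hcard3 0)
    have m1 : B1 ∈ T 0 := by rw [hT0]; simp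
    have m2 : B2 ∈ T 0 := by rw [hT0]; simp
    have m3 : B3 ∈ T 0 := by rw [hT0]; simp
    obtain ⟨p1, p2, hp12, hB1⟩ := Finset.card_eq_two.mp (hblocks 0 B1 m1).2
    obtain ⟨p3, p4, hp34, hB2⟩ := Finset.card_eq_two.mp (hblocks 0 B2 m2).2
    obtain ⟨p5, p6, hp56, hB3⟩ := Finset.card_eq_two.mp (hblocks 0 B3 m3).2
    have hd12 : Disjoint B1 B2 := hbd 0 B1 m1 B2 m2 h12
    have hd13 : Disjoint B1 B3 := hbd 0 B1 m1 B3 m3 h13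
    have hd23 : Disjoint B2 B3 := hbd 0 B2 m2 B3 m3 h23
    have hne : ∀ x ∈ B1, ∀ y ∈ B2, x ≠ y := fun x hx y hy hxy =>
      Finset.disjoint_left.mp hd12 hx (hxy ▸ hy)
    have hne13 : ∀ x ∈ B1, ∀ y ∈ B3, x ≠ y := fun x hx y hy hxy =>
      Finset.disjoint_left.mp hd13 hx (hxy ▸ hy)
    have hne23 : ∀ x ∈ B2, ∀ y ∈ B3, x ≠ y := fun x hx y hy hxy =>
      Finset.disjoint_left.mp hd23 hx (hxy ▸ hy)
    have i1 : p1 ∈ B1 := by rw [hB1]; simp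
    have i2 : p2 ∈ B1 := by rw [hB1]; simp
    have i3 : p3 ∈ B2 := by rw [hB2]; simp
    have i4 : p4 ∈ B2 := by rw [hB2]; simp
    have i5 : p5 ∈ B3 := by rw [hB3]; simp
    have i6 : p6 ∈ B3 := by rw [hB3]; simp
    have hp13 := hne _ i1 _ i3; have hp14 := hne _ i1 _ i4
    have hp23 := hne _ i2 _ i3; have hp24 := hne _ i2 _ i4
    have hp15 := hne13 _ i1 _ i5; have hp16 := hne13 _ i1 _ i6
    have hp25 := hne13 _ i2 _ i5; have hp26 := hne13 _ i2 _ i6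
    have hp35 := hne23 _ i3 _ i5; have hp36 := hne23 _ i3 _ i6
    have hp45 := hne23 _ i4 _ i5; have hp46 := hne23 _ i4 _ i6
    -- the relabeling to {1,…,6}
    set f0 : ℕ → ℕ := fun x =>
      if x = p1 then 1 else if x = p2 then 2 else if x = p3 then 3 else
      if x = p4 then 4 else if x = p5 then 5 else if x = p6 then 6 else x + 7 with hf0def
    have hf0inj : Function.Injective f0 := by
      intro x y h
      simp only [hf0def] at h
      split_ifs at h <;> omega
    have v1 : f0 p1 = 1 := by simp [hf0def]
    have v2 : f0 p2 = 2 := by simp [hf0def, (Ne.symm hp12)]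
    have v3 : f0 p3 = 3 := by simp [hf0def, (Ne.symm hp13), (Ne.symm hp23)]
    have v4 : f0 p4 = 4 := by simp [hf0def, (Ne.symm hp14), (Ne.symm hp24), hp34.symm]
    have v5 : f0 p5 = 5 := by
      simp [hf0def, (Ne.symm hp15), (Ne.symm hp25), (Ne.symm hp35), (Ne.symm hp45)]
    have v6 : f0 p6 = 6 := by
      simp [hf0def, (Ne.symm hp16), (Ne.symm hp26), (Ne.symm hp36), (Ne.symm hp46), hp56.symm]
    -- the foundation
    have hfound : foundT T = B1 ∪ (B2 ∪ B3) := by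
      apply Finset.Subset.antisymm
      · intro x hx
        have hco := count_one T hT hS x hx 0
        have : ((T 0).filter (fun b => x ∈ b)).Nonempty := by
          rw [← Finset.card_pos, hco]; norm_num
        obtain ⟨bb, hbb⟩ := this
        obtain ⟨hbbT, hxbb⟩ := Finset.mem_filter.mp hbb
        rw [hT0] at hbbT
        simp only [Finset.mem_insert, Finset.mem_singleton] at hbbT
        rcases hbbT with rfl | rfl | rfl
        · exact Finset.mem_union_left _ hxbb
        · exact Finset.mem_union_right _ (Finset.mem_union_left _ hxbb)
        · exact Finset.mem_union_right _ (Finset.mem_union_right _ hxbb)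
      · refine Finset.union_subset (hblocks 0 B1 m1).1
          (Finset.union_subset (hblocks 0 B2 m2).1 (hblocks 0 B3 m3).1)
    have hVimg : (foundT T).image f0 = ({1,2,3,4,5,6} : Finset ℕ) := by
      rw [hfound, hB1, hB2, hB3]
      simp only [Finset.image_union, Finset.image_insert, Finset.image_singleton,
        v1, v2, v3, v4, v5, v6]
      decide
    -- the relabeled collections
    set M : Fin 3 → Finset (Finset ℕ) := fun i => (T i).image (Finset.image f0) with hMdef
    have himginj : Function.Injective (Finset.image f0) := Finset.image_injective hf0inj
    have hM0 : M 0 = C0 := by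
      simp only [hMdef, hT0, hB1, hB2, hB3, Finset.image_insert, Finset.image_singleton,
        v1, v2, v3, v4, v5, v6]
      decide
    have hMmem : ∀ i, M i ∈ MLl := by
      intro i
      apply memML
      · rw [Finset.mem_powersetCard]
        constructor
        · intro b' hb'
          obtain ⟨b, hb, rfl⟩ := Finset.mem_image.mp hb'
          rw [Finset.mem_powersetCard]
          constructor
          · rw [← hVimg]; exact Finset.image_subset_image (hblocks i b hb).1
          · rw [Finset.card_image_of_injective _ hf0inj]; exact (hblocks i b hb).2
        · rw [Finset.card_image_of_injective _ himginj]; exact hcard3 i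
      · intro b' hb' c' hc' hne'
        obtain ⟨b, hb, rfl⟩ := Finset.mem_image.mp hb'
        obtain ⟨c, hc, rfl⟩ := Finset.mem_image.mp hc'
        have hbc : b ≠ c := fun hh => hne' (by rw [hh])
        exact (Finset.disjoint_image hf0inj).mpr (hbd i b hb c hc hbc)
    have hMdisj : ∀ i j : Fin 3, i ≠ j → M i ∩ M j = ∅ := by
      intro i j hij
      rw [← Finset.disjoint_iff_inter_eq_empty]
      exact (Finset.disjoint_image himginj).mpr (hdisjC i j hij)
    have h01 : C0 ∩ M 1 = ∅ := by rw [← hM0]; exact hMdisj 0 1 (by decide)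
    have h02 : C0 ∩ M 2 = ∅ := by rw [← hM0]; exact hMdisj 0 2 (by decide)
    have h12' : M 1 ∩ M 2 = ∅ := hMdisj 1 2 (by decide)
    obtain ⟨l, hl, hlC0, hcases⟩ := bigD (M 1) (hMmem 1) (M 2) (hMmem 2) h01 h02 h12'
    obtain ⟨hlen, hnd, hmem⟩ := permsProp l hl
    have hpinj := pApp_inj hlen hnd hmem
    have hfinj : Function.Injective (fun x => pApp l (f0 x)) := hpinj.comp hf0inj
    have hkey : ∀ i, (T i).image (Finset.image (fun x => pApp l (f0 x))) = pSet l (M i) := by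
      intro i
      simp only [pSet, hMdef, Finset.image_image]
      apply Finset.image_congr
      intro b _
      simp [Finset.image_image, Function.comp_def]
    have hM0' : pSet l (M 0) = C0 := by rw [hM0]; exact hlC0
    rcases hcases with ⟨q1, q2⟩ | ⟨q1, q2⟩ | ⟨q1, q2⟩ | ⟨q1, q2⟩
    · left
      refine ⟨_, hfinj, Equiv.refl _, ?_⟩
      intro i
      fin_cases i
      · exact (hkey 0).trans (hM0'.trans (by decide))
      · exact (hkey 1).trans (q1.trans (by decide))
      · exact (hkey 2).trans (q2.trans (by decide))
    · left
      refine ⟨_, hfinj, Equiv.swap 1 2, ?_⟩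
      intro i
      fin_cases i
      · exact (hkey 0).trans (hM0'.trans (by decide))
      · exact (hkey 1).trans (q1.trans (by decide))
      · exact (hkey 2).trans (q2.trans (by decide))
    · right
      refine ⟨_, hfinj, Equiv.refl _, ?_⟩
      intro i
      fin_cases i
      · exact (hkey 0).trans (hM0'.trans (by decide))
      · exact (hkey 1).trans (q1.trans (by decide))
      · exact (hkey 2).trans (q2.trans (by decide))
    · right
      refine ⟨_, hfinj, Equiv.swap 1 2, ?_⟩
      intro i
      fin_cases i
      · exact (hkey 0).trans (hM0'.trans (by decide))
      · exact (hkey 1).trans (q1.trans (by decide))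
      · exact (hkey 2).trans (q2.trans (by decide))
end

section
/- There exists a 3-way 4-homogeneous (v,3,2) Steiner trade if and only if v ≥ 9 and v ≡ 0 (mod 3). -/
open Finset

/- ### Auxiliary development -/

lemma mem_foundT {μ : ℕ} {T : Fin μ → Finset (Finset ℕ)} {x : ℕ} :
    x ∈ foundT T ↔ ∃ i, ∃ b ∈ T i, x ∈ b := by
  simp only [foundT, Finset.mem_biUnion, Finset.mem_univ, true_and, id_eq]
  tauto

/-- A concrete, decidable certificate for a 3-way 4-homogeneous (v,3,2) Steiner
trade whose foundation is `range v`. -/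
def Cond (v m : ℕ) (T : Fin 3 → Finset (Finset ℕ)) : Prop :=
  foundT T = Finset.range v ∧
  0 < m ∧
  (∀ i, (T i).card = m) ∧
  (∀ i, ∀ b ∈ T i, b ⊆ Finset.range v ∧ b.card = 3) ∧
  (∀ i j : Fin 3, i ≠ j → T i ∩ T j = ∅) ∧
  (∀ s ∈ (Finset.range v).powersetCard 2, ∀ i j : Fin 3,
      ((T i).filter (fun b => s ⊆ b)).card = ((T j).filter (fun b => s ⊆ b)).card) ∧
  (∀ s ∈ (Finset.range v).powersetCard 2, ∀ i : Fin 3,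
      ((T i).filter (fun b => s ⊆ b)).card ≤ 1) ∧
  (∀ x ∈ Finset.range v, ∀ i : Fin 3, ((T i).filter (fun b => x ∈ b)).card = 4)

instance (v m : ℕ) (T : Fin 3 → Finset (Finset ℕ)) : Decidable (Cond v m T) := by
  unfold Cond; infer_instance

lemma cond_is3Steiner {v m : ℕ} {T : Fin 3 → Finset (Finset ℕ)}
    (h : Cond v m T) : Is3Steiner 4 v m T := by
  obtain ⟨hf, hm, hc, hb, hd, hp, hs, hh⟩ := h
  refine ⟨⟨hm, hc, fun i b hbi => by rw [hf]; exact hb i b hbi,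
    fun i j hij => Finset.disjoint_iff_inter_eq_empty.mpr (hd i j hij),
    fun s hsub hcard i j =>
      hp s (Finset.mem_powersetCard.mpr ⟨hf ▸ hsub, hcard⟩) i j⟩,
    fun i s hsub hcard =>
      hs s (Finset.mem_powersetCard.mpr ⟨hf ▸ hsub, hcard⟩) i,
    fun x hx i => hh x (hf ▸ hx) i,
    by rw [hf, Finset.card_range]⟩

/- ### Necessity -/

lemma forward {v m : ℕ} {T : Fin 3 → Finset (Finset ℕ)} (h : Is3Steiner 4 v m T) :
    9 ≤ v ∧ v % 3 = 0 := by
  obtain ⟨⟨hm, hc, hb, hd, hp⟩, hst, hh, hv⟩ := h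
  -- double counting: 3 * m = 4 * v
  have count1 : ∑ b ∈ T 0, b.card = 3 * m := by
    rw [Finset.sum_congr rfl (fun b hb' => (hb 0 b hb').2), Finset.sum_const,
      smul_eq_mul, hc 0, mul_comm]
  have count2 : ∑ b ∈ T 0, b.card = 4 * v := by
    have e1 : ∀ b ∈ T 0, b.card = ((foundT T).filter (fun x => x ∈ b)).card := by
      intro b hb'
      rw [Finset.filter_mem_eq_inter, Finset.inter_eq_right.mpr (hb 0 b hb').1]
    rw [Finset.sum_congr rfl e1]
    simp_rw [Finset.card_filter]
    rw [Finset.sum_comm]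
    have e2 : ∀ x ∈ foundT T, (∑ b ∈ T 0, if x ∈ b then 1 else 0) = 4 := by
      intro x hx
      rw [← Finset.card_filter]
      exact hh x hx 0
    rw [Finset.sum_congr rfl e2, Finset.sum_const, smul_eq_mul, hv, mul_comm]
  have key : 3 * m = 4 * v := count1 ▸ count2
  refine ⟨?_, by omega⟩
  -- v ≥ 9
  obtain ⟨b₀, hb₀⟩ := Finset.card_pos.mp (by rw [hc 0]; exact hm)
  obtain ⟨x, hx⟩ := Finset.card_pos.mp
    (show 0 < b₀.card by rw [(hb 0 b₀ hb₀).2]; norm_num)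
  have hxV : x ∈ foundT T := (hb 0 b₀ hb₀).1 hx
  set B := (T 0).filter (fun b => x ∈ b) with hB
  have hBcard : B.card = 4 := hh x hxV 0
  have hdisjB : ∀ b ∈ B, ∀ c ∈ B, b ≠ c → Disjoint (b.erase x) (c.erase x) := by
    intro b hbB c hcB hne
    rw [Finset.disjoint_left]
    intro y hyb hyc
    have hyx : y ≠ x := (Finset.mem_erase.mp hyb).1
    have hyb' : y ∈ b := (Finset.mem_erase.mp hyb).2
    have hyc' : y ∈ c := (Finset.mem_erase.mp hyc).2
    have hbT : b ∈ T 0 := (Finset.mem_filter.mp hbB).1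
    have hcT : c ∈ T 0 := (Finset.mem_filter.mp hcB).1
    have hxb : x ∈ b := (Finset.mem_filter.mp hbB).2
    have hxc : x ∈ c := (Finset.mem_filter.mp hcB).2
    have hpair_sub : ({x, y} : Finset ℕ) ⊆ foundT T := by
      intro z hz
      rcases Finset.mem_insert.mp hz with rfl | hz'
      · exact hxV
      · rw [Finset.mem_singleton] at hz'
        subst hz'
        exact (hb 0 b hbT).1 hyb'
    have hpair_card : ({x, y} : Finset ℕ).card = 2 := by
      rw [Finset.card_insert_of_notMem (by simp [Ne.symm hyx]), Finset.card_singleton]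
    have hple : ((T 0).filter (fun blk => ({x, y} : Finset ℕ) ⊆ blk)).card ≤ 1 :=
      hst 0 {x, y} hpair_sub hpair_card
    have hsub_b : ({x, y} : Finset ℕ) ⊆ b := by
      intro z hz
      rcases Finset.mem_insert.mp hz with rfl | hz'
      · exact hxb
      · rw [Finset.mem_singleton] at hz'; subst hz'; exact hyb'
    have hsub_c : ({x, y} : Finset ℕ) ⊆ c := by
      intro z hz
      rcases Finset.mem_insert.mp hz with rfl | hz'
      · exact hxc
      · rw [Finset.mem_singleton] at hz'; subst hz'; exact hyc'
    have h2 : 1 < ((T 0).filter (fun blk => ({x, y} : Finset ℕ) ⊆ blk)).card :=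
      Finset.one_lt_card.mpr
        ⟨b, Finset.mem_filter.mpr ⟨hbT, hsub_b⟩, c, Finset.mem_filter.mpr ⟨hcT, hsub_c⟩, hne⟩
    omega
  have hNcard : (B.biUnion (fun b => b.erase x)).card = 8 := by
    rw [Finset.card_biUnion hdisjB]
    have e : ∀ b ∈ B, (b.erase x).card = 2 := by
      intro b hbB
      rw [Finset.card_erase_of_mem (Finset.mem_filter.mp hbB).2,
        (hb 0 b (Finset.mem_filter.mp hbB).1).2]
    rw [Finset.sum_congr rfl e, Finset.sum_const, smul_eq_mul, hBcard]
  have hxnot : x ∉ B.biUnion (fun b => b.erase x) := by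
    simp [Finset.mem_biUnion]
  have hsub9 : insert x (B.biUnion (fun b => b.erase x)) ⊆ foundT T := by
    intro z hz
    rcases Finset.mem_insert.mp hz with rfl | hz'
    · exact hxV
    · obtain ⟨b, hbB, hzb⟩ := Finset.mem_biUnion.mp hz'
      exact (hb 0 b (Finset.mem_filter.mp hbB).1).1 (Finset.erase_subset _ _ hzb)
  have h9 : (insert x (B.biUnion (fun b => b.erase x))).card = 9 := by
    rw [Finset.card_insert_of_notMem hxnot, hNcard]
  calc 9 = (insert x (B.biUnion (fun b => b.erase x))).card := h9.symm
    _ ≤ (foundT T).card := Finset.card_le_card hsub9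
    _ = v := hv

/- ### Disjoint union with a shifted trade -/

lemma cond_union {v₁ m₁ v₂ m₂ : ℕ} {T₁ T₂ : Fin 3 → Finset (Finset ℕ)}
    (h1 : Cond v₁ m₁ T₁) (h2 : Cond v₂ m₂ T₂) :
    Cond (v₁ + v₂) (m₁ + m₂)
      (fun i => T₁ i ∪ (T₂ i).image (fun b => b.image (· + v₁))) := by
  obtain ⟨hf1, hm1, hc1, hb1, hd1, hp1, hs1, hh1⟩ := h1
  obtain ⟨hf2, hm2, hc2, hb2, hd2, hp2, hs2, hh2⟩ := h2
  set F : Finset ℕ → Finset ℕ := fun b => b.image (· + v₁) with hF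
  set S : Fin 3 → Finset (Finset ℕ) := fun i => (T₂ i).image F with hS
  have hadd_inj : Function.Injective (· + v₁) := add_left_injective v₁
  have hF_inj : Function.Injective F := Finset.image_injective hadd_inj
  have hSmem : ∀ i, ∀ b ∈ S i, (∀ x ∈ b, v₁ ≤ x ∧ x < v₁ + v₂) ∧ b.card = 3 := by
    intro i b hbS
    obtain ⟨c, hcT, rfl⟩ := Finset.mem_image.mp hbS
    constructor
    · intro x hx
      obtain ⟨y, hy, rfl⟩ := Finset.mem_image.mp hx
      have := Finset.mem_range.mp ((hb2 i c hcT).1 hy)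
      omega
    · rw [hF, Finset.card_image_of_injective _ hadd_inj, (hb2 i c hcT).2]
  have hT1mem : ∀ i, ∀ b ∈ T₁ i, ∀ x ∈ b, x < v₁ := by
    intro i b hbi x hx
    exact Finset.mem_range.mp ((hb1 i b hbi).1 hx)
  have hTS_disj : ∀ i j, Disjoint (T₁ i) (S j) := by
    intro i j
    rw [Finset.disjoint_left]
    intro b hbi hbj
    obtain ⟨x, hx⟩ := Finset.card_pos.mp
      (show 0 < b.card by rw [(hb1 i b hbi).2]; norm_num)
    have h1x := hT1mem i b hbi x hx
    have h2x := ((hSmem j b hbj).1 x hx).1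
    omega
  have filter_card_union : ∀ (i : Fin 3) (p : Finset ℕ → Prop) [DecidablePred p],
      ((T₁ i ∪ S i).filter p).card = ((T₁ i).filter p).card + ((S i).filter p).card := by
    intro i p _
    rw [Finset.filter_union,
      Finset.card_union_of_disjoint (Finset.disjoint_filter_filter (hTS_disj i i))]
  have van1 : ∀ (i : Fin 3) (s : Finset ℕ) (x : ℕ), x ∈ s → v₁ ≤ x →
      (T₁ i).filter (fun b => s ⊆ b) = ∅ := by
    intro i s x hxs hxv
    rw [Finset.filter_eq_empty_iff]
    intro b hb' hsub
    exact absurd (hT1mem i b hb' x (hsub hxs)) (by omega)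
  have van2 : ∀ (i : Fin 3) (s : Finset ℕ) (x : ℕ), x ∈ s → x < v₁ →
      (S i).filter (fun b => s ⊆ b) = ∅ := by
    intro i s x hxs hxv
    rw [Finset.filter_eq_empty_iff]
    intro b hb' hsub
    exact absurd ((hSmem i b hb').1 x (hsub hxs)).1 (by omega)
  have trans2 : ∀ (i : Fin 3) (s : Finset ℕ), (∀ x ∈ s, v₁ ≤ x) →
      ((S i).filter (fun b => s ⊆ b)).card
        = ((T₂ i).filter (fun b => s.image (· - v₁) ⊆ b)).card := by
    intro i s hall
    have e : (S i).filter (fun b => s ⊆ b)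
        = ((T₂ i).filter (fun c => s.image (· - v₁) ⊆ c)).image F := by
      rw [hS]
      rw [Finset.filter_image]
      congr 1
      refine Finset.filter_congr fun c hcT => ?_
      constructor
      · intro hsub y hy
        obtain ⟨x, hxs, rfl⟩ := Finset.mem_image.mp hy
        obtain ⟨z, hzc, hz⟩ := Finset.mem_image.mp (hsub hxs)
        have hxv := hall x hxs
        have : x - v₁ = z := by omega
        rwa [this]
      · intro hsub x hxs
        have hx' : x - v₁ ∈ c := hsub (Finset.mem_image_of_mem _ hxs)
        have hxv := hall x hxs
        have he : x - v₁ + v₁ = x := by omega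
        exact he ▸ Finset.mem_image_of_mem _ hx'
    rw [e, Finset.card_image_of_injective _ hF_inj]
  have img_mem : ∀ (s : Finset ℕ), s ∈ (Finset.range (v₁ + v₂)).powersetCard 2 →
      (∀ x ∈ s, v₁ ≤ x) → s.image (· - v₁) ∈ (Finset.range v₂).powersetCard 2 := by
    intro s hsmem hall
    obtain ⟨hsub, hcard2⟩ := Finset.mem_powersetCard.mp hsmem
    refine Finset.mem_powersetCard.mpr ⟨?_, ?_⟩
    · intro y hy
      obtain ⟨x, hxs, rfl⟩ := Finset.mem_image.mp hy
      have h1 := Finset.mem_range.mp (hsub hxs)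
      have h2 := hall x hxs
      simp only [Finset.mem_range]
      omega
    · rw [Finset.card_image_of_injOn, hcard2]
      intro x hxs y hys hxy
      have hxy' : x - v₁ = y - v₁ := hxy
      have := hall x hxs
      have := hall y hys
      omega
  refine ⟨?_, by omega, ?_, ?_, ?_, ?_, ?_, ?_⟩
  -- foundation
  · ext x
    simp only [mem_foundT, Finset.mem_union, Finset.mem_range]
    constructor
    · rintro ⟨i, b, hb' | hb', hxb⟩
      · exact lt_of_lt_of_le (hT1mem i b hb' x hxb) (Nat.le_add_right _ _)
      · exact ((hSmem i b hb').1 x hxb).2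
    · intro hx
      by_cases hx1 : x < v₁
      · have hxf : x ∈ foundT T₁ := by rw [hf1]; exact Finset.mem_range.mpr hx1
        obtain ⟨i, b, hbi, hxb⟩ := mem_foundT.mp hxf
        exact ⟨i, b, Or.inl hbi, hxb⟩
      · have hxf : x - v₁ ∈ foundT T₂ := by rw [hf2]; exact Finset.mem_range.mpr (by omega)
        obtain ⟨i, b, hbi, hxb⟩ := mem_foundT.mp hxf
        refine ⟨i, F b, Or.inr (Finset.mem_image_of_mem F hbi), ?_⟩
        have he : x - v₁ + v₁ = x := by omega
        exact he ▸ Finset.mem_image_of_mem _ hxb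
  -- cardinalities
  · intro i
    rw [Finset.card_union_of_disjoint (hTS_disj i i), hc1 i, hS,
      Finset.card_image_of_injective _ hF_inj, hc2 i]
  -- blocks
  · intro i b hb'
    rcases Finset.mem_union.mp hb' with h | h
    · exact ⟨fun x hx => Finset.mem_range.mpr (by have := hT1mem i b h x hx; omega),
        (hb1 i b h).2⟩
    · exact ⟨fun x hx => Finset.mem_range.mpr ((hSmem i b h).1 x hx).2, (hSmem i b h).2⟩
  -- pairwise disjoint collections
  · intro i j hij
    rw [← Finset.disjoint_iff_inter_eq_empty, Finset.disjoint_union_left]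
    constructor
    · rw [Finset.disjoint_union_right]
      exact ⟨Finset.disjoint_iff_inter_eq_empty.mpr (hd1 i j hij), hTS_disj i j⟩
    · rw [Finset.disjoint_union_right]
      exact ⟨(hTS_disj j i).symm,
        (Finset.disjoint_image hF_inj).mpr
          (Finset.disjoint_iff_inter_eq_empty.mpr (hd2 i j hij))⟩
  -- equal pair counts
  · intro s hsmem i j
    obtain ⟨hsub, hcard2⟩ := Finset.mem_powersetCard.mp hsmem
    rw [filter_card_union i _, filter_card_union j _]
    by_cases hlow : ∀ x ∈ s, x < v₁
    · obtain ⟨x0, hx0⟩ := Finset.card_pos.mp (show 0 < s.card by omega)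
      rw [van2 i s x0 hx0 (hlow x0 hx0), van2 j s x0 hx0 (hlow x0 hx0)]
      have hs1mem : s ∈ (Finset.range v₁).powersetCard 2 :=
        Finset.mem_powersetCard.mpr
          ⟨fun x hx => Finset.mem_range.mpr (hlow x hx), hcard2⟩
      rw [hp1 s hs1mem i j]
    · push_neg at hlow
      obtain ⟨x0, hx0s, hx0⟩ := hlow
      rw [van1 i s x0 hx0s hx0, van1 j s x0 hx0s hx0]
      by_cases hhigh : ∀ x ∈ s, v₁ ≤ x
      · rw [trans2 i s hhigh, trans2 j s hhigh,
          hp2 _ (img_mem s hsmem hhigh) i j]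
      · push_neg at hhigh
        obtain ⟨y0, hy0s, hy0⟩ := hhigh
        rw [van2 i s y0 hy0s hy0, van2 j s y0 hy0s hy0]
  -- Steiner
  · intro s hsmem i
    obtain ⟨hsub, hcard2⟩ := Finset.mem_powersetCard.mp hsmem
    rw [filter_card_union i _]
    by_cases hlow : ∀ x ∈ s, x < v₁
    · obtain ⟨x0, hx0⟩ := Finset.card_pos.mp (show 0 < s.card by omega)
      rw [van2 i s x0 hx0 (hlow x0 hx0)]
      have hs1mem : s ∈ (Finset.range v₁).powersetCard 2 :=
        Finset.mem_powersetCard.mpr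
          ⟨fun x hx => Finset.mem_range.mpr (hlow x hx), hcard2⟩
      have := hs1 s hs1mem i
      simpa using this
    · push_neg at hlow
      obtain ⟨x0, hx0s, hx0⟩ := hlow
      rw [van1 i s x0 hx0s hx0]
      by_cases hhigh : ∀ x ∈ s, v₁ ≤ x
      · rw [trans2 i s hhigh]
        have := hs2 _ (img_mem s hsmem hhigh) i
        simpa using this
      · push_neg at hhigh
        obtain ⟨y0, hy0s, hy0⟩ := hhigh
        rw [van2 i s y0 hy0s hy0]
        simp
  -- homogeneity
  · intro x hx i
    rw [filter_card_union i _]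
    rw [Finset.mem_range] at hx
    by_cases hxlt : x < v₁
    · have hz : (S i).filter (fun b => x ∈ b) = ∅ := by
        rw [Finset.filter_eq_empty_iff]
        intro b hb' hxb
        exact absurd ((hSmem i b hb').1 x hxb).1 (by omega)
      rw [hz]
      have := hh1 x (Finset.mem_range.mpr hxlt) i
      simpa using this
    · have h1z : (T₁ i).filter (fun b => x ∈ b) = ∅ := by
        rw [Finset.filter_eq_empty_iff]
        intro b hb' hxb
        exact absurd (hT1mem i b hb' x hxb) (by omega)
      rw [h1z]
      have htrans : ((S i).filter (fun b => x ∈ b)).card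
          = ((T₂ i).filter (fun c => x - v₁ ∈ c)).card := by
        have e : (S i).filter (fun b => x ∈ b)
            = ((T₂ i).filter (fun c => x - v₁ ∈ c)).image F := by
          rw [hS, Finset.filter_image]
          congr 1
          refine Finset.filter_congr fun c hcT => ?_
          constructor
          · intro hxF
            obtain ⟨z, hzc, hz⟩ := Finset.mem_image.mp hxF
            have : x - v₁ = z := by omega
            rwa [this]
          · intro h'
            have he : x - v₁ + v₁ = x := by omega
            exact he ▸ Finset.mem_image_of_mem _ h'
        rw [e, Finset.card_image_of_injective _ hF_inj]
      rw [htrans]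
      have := hh2 (x - v₁) (Finset.mem_range.mpr (by omega)) i
      simpa using this

/- ### Base constructions (found by computer search, verified by `decide`) -/

def T9 : Fin 3 → Finset (Finset ℕ) :=
  ![{({0,1,2} : Finset ℕ), ({0,3,8} : Finset ℕ), ({0,4,6} : Finset ℕ), ({0,5,7} : Finset ℕ), ({1,3,6} : Finset ℕ), ({1,4,7} : Finset ℕ), ({1,5,8} : Finset ℕ), ({2,3,7} : Finset ℕ), ({2,4,8} : Finset ℕ), ({2,5,6} : Finset ℕ), ({3,4,5} : Finset ℕ), ({6,7,8} : Finset ℕ)},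
    {({0,1,6} : Finset ℕ), ({0,2,8} : Finset ℕ), ({0,3,5} : Finset ℕ), ({0,4,7} : Finset ℕ), ({1,2,3} : Finset ℕ), ({1,4,8} : Finset ℕ), ({1,5,7} : Finset ℕ), ({2,4,5} : Finset ℕ), ({2,6,7} : Finset ℕ), ({3,4,6} : Finset ℕ), ({3,7,8} : Finset ℕ), ({5,6,8} : Finset ℕ)},
    {({0,1,5} : Finset ℕ), ({0,2,4} : Finset ℕ), ({0,3,7} : Finset ℕ), ({0,6,8} : Finset ℕ), ({1,2,6} : Finset ℕ), ({1,3,4} : Finset ℕ), ({1,7,8} : Finset ℕ), ({2,3,8} : Finset ℕ), ({2,5,7} : Finset ℕ), ({3,5,6} : Finset ℕ), ({4,5,8} : Finset ℕ), ({4,6,7} : Finset ℕ)}]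

def T12 : Fin 3 → Finset (Finset ℕ) :=
  ![{({0,4,8} : Finset ℕ), ({0,5,9} : Finset ℕ), ({0,6,10} : Finset ℕ), ({0,7,11} : Finset ℕ), ({1,4,9} : Finset ℕ), ({1,5,10} : Finset ℕ), ({1,6,11} : Finset ℕ), ({1,7,8} : Finset ℕ), ({2,4,10} : Finset ℕ), ({2,5,11} : Finset ℕ), ({2,6,8} : Finset ℕ), ({2,7,9} : Finset ℕ), ({3,4,11} : Finset ℕ), ({3,5,8} : Finset ℕ), ({3,6,9} : Finset ℕ), ({3,7,10} : Finset ℕ)},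
    {({0,4,9} : Finset ℕ), ({0,5,10} : Finset ℕ), ({0,6,11} : Finset ℕ), ({0,7,8} : Finset ℕ), ({1,4,10} : Finset ℕ), ({1,5,11} : Finset ℕ), ({1,6,8} : Finset ℕ), ({1,7,9} : Finset ℕ), ({2,4,11} : Finset ℕ), ({2,5,8} : Finset ℕ), ({2,6,9} : Finset ℕ), ({2,7,10} : Finset ℕ), ({3,4,8} : Finset ℕ), ({3,5,9} : Finset ℕ), ({3,6,10} : Finset ℕ), ({3,7,11} : Finset ℕ)},
    {({0,4,10} : Finset ℕ), ({0,5,11} : Finset ℕ), ({0,6,8} : Finset ℕ), ({0,7,9} : Finset ℕ), ({1,4,11} : Finset ℕ), ({1,5,8} : Finset ℕ), ({1,6,9} : Finset ℕ), ({1,7,10} : Finset ℕ), ({2,4,8} : Finset ℕ), ({2,5,9} : Finset ℕ), ({2,6,10} : Finset ℕ), ({2,7,11} : Finset ℕ), ({3,4,9} : Finset ℕ), ({3,5,10} : Finset ℕ), ({3,6,11} : Finset ℕ), ({3,7,8} : Finset ℕ)}]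

def T15 : Fin 3 → Finset (Finset ℕ) :=
  ![{({0,1,14} : Finset ℕ), ({0,2,13} : Finset ℕ), ({0,4,11} : Finset ℕ), ({0,7,8} : Finset ℕ), ({1,2,9} : Finset ℕ), ({1,3,5} : Finset ℕ), ({1,8,12} : Finset ℕ), ({2,3,4} : Finset ℕ), ({2,6,10} : Finset ℕ), ({3,7,14} : Finset ℕ), ({3,10,11} : Finset ℕ), ({4,5,12} : Finset ℕ), ({4,6,8} : Finset ℕ), ({5,6,7} : Finset ℕ), ({5,9,13} : Finset ℕ), ({6,13,14} : Finset ℕ), ({7,9,11} : Finset ℕ), ({8,9,10} : Finset ℕ), ({10,12,14} : Finset ℕ), ({11,12,13} : Finset ℕ)},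
    {({0,1,8} : Finset ℕ), ({0,2,4} : Finset ℕ), ({0,7,11} : Finset ℕ), ({0,13,14} : Finset ℕ), ({1,2,3} : Finset ℕ), ({1,5,9} : Finset ℕ), ({1,12,14} : Finset ℕ), ({2,6,13} : Finset ℕ), ({2,9,10} : Finset ℕ), ({3,4,11} : Finset ℕ), ({3,5,7} : Finset ℕ), ({3,10,14} : Finset ℕ), ({4,5,6} : Finset ℕ), ({4,8,12} : Finset ℕ), ({5,12,13} : Finset ℕ), ({6,7,14} : Finset ℕ), ({6,8,10} : Finset ℕ), ({7,8,9} : Finset ℕ), ({9,11,13} : Finset ℕ), ({10,11,12} : Finset ℕ)},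
    {({0,1,2} : Finset ℕ), ({0,4,8} : Finset ℕ), ({0,7,14} : Finset ℕ), ({0,11,13} : Finset ℕ), ({1,3,14} : Finset ℕ), ({1,5,12} : Finset ℕ), ({1,8,9} : Finset ℕ), ({2,3,10} : Finset ℕ), ({2,4,6} : Finset ℕ), ({2,9,13} : Finset ℕ), ({3,4,5} : Finset ℕ), ({3,7,11} : Finset ℕ), ({4,11,12} : Finset ℕ), ({5,6,13} : Finset ℕ), ({5,7,9} : Finset ℕ), ({6,7,8} : Finset ℕ), ({6,10,14} : Finset ℕ), ({8,10,12} : Finset ℕ), ({9,10,11} : Finset ℕ), ({12,13,14} : Finset ℕ)}]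

set_option maxRecDepth 100000 in
lemma cond9 : Cond 9 12 T9 := by decide

set_option maxRecDepth 100000 in
lemma cond12 : Cond 12 16 T12 := by decide

set_option maxRecDepth 100000 in
lemma cond15 : Cond 15 20 T15 := by decide

/- ### Sufficiency -/

lemma exists_cond (v : ℕ) (h9 : 9 ≤ v) (h3 : v % 3 = 0) :
    ∃ m T, Cond v m T := by
  induction v using Nat.strong_induction_on with
  | _ v ih =>
    rcases (show v = 9 ∨ v = 12 ∨ v = 15 ∨ 18 ≤ v by omega) with h | h | h | h
    · exact h ▸ ⟨12, T9, cond9⟩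
    · exact h ▸ ⟨16, T12, cond12⟩
    · exact h ▸ ⟨20, T15, cond15⟩
    · obtain ⟨m, T, hT⟩ := ih (v - 9) (by omega) (by omega) (by omega)
      have hu := cond_union hT cond9
      rw [show v - 9 + 9 = v by omega] at hu
      exact ⟨_, _, hu⟩

/-- a 3-way 4-homogeneous (v,3,2) Steiner trade exists iff
v ≥ 9 and 3 ∣ v. -/
theorem stmt13 (v : ℕ) :
    (∃ (m : ℕ) (T : Fin 3 → Finset (Finset ℕ)), Is3Steiner 4 v m T) ↔
      9 ≤ v ∧ v % 3 = 0 := by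
  constructor
  · rintro ⟨m, T, hT⟩
    exact forward hT
  · rintro ⟨h9, h3⟩
    obtain ⟨m, T, hT⟩ := exists_cond v h9 h3
    exact ⟨m, T, cond_is3Steiner hT⟩
end

section
/- There exists a 3-way 5-homogeneous (12,3,2) Steiner trade of volume 20. -/
open Finset

def B1 : Finset (Finset ℕ) :=
  {{3,4,9},{3,7,8},{3,6,10},{1,3,11},{0,3,5},{2,4,6},{1,6,9},{5,6,8},{0,6,11},{4,8,11},
   {0,2,8},{1,8,10},{1,4,7},{1,2,5},{0,4,10},{0,7,9},{5,7,11},{5,9,10},{2,9,11},{2,7,10}}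

def B2 : Finset (Finset ℕ) :=
  {{3,4,11},{0,3,7},{3,5,10},{1,3,9},{3,6,8},{4,6,10},{1,4,8},{0,2,4},{4,7,9},{7,8,10},
   {0,9,10},{1,2,10},{0,5,6},{1,6,11},{0,8,11},{5,9,11},{2,7,11},{1,5,7},{2,5,8},{2,6,9}}

def B3 : Finset (Finset ℕ) :=
  {{3,4,8},{4,6,9},{0,4,7},{1,4,11},{2,4,10},{0,5,8},{6,8,10},{0,3,10},{0,2,6},{0,9,11},
   {1,5,10},{1,3,6},{5,6,11},{2,8,11},{7,9,10},{1,2,9},{2,5,7},{3,7,11},{3,5,9},{1,7,8}}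

def Tw : Fin 3 → Finset (Finset ℕ) := ![B1, B2, B3]

lemma pair_red {α : Type*} [DecidableEq α] (V : Finset α) (P : Finset α → Prop)
    (h : ∀ a ∈ V, ∀ b ∈ V, a ≠ b → P {a, b}) :
    ∀ s : Finset α, s ⊆ V → s.card = 2 → P s := by
  intro s hs hc
  obtain ⟨a, b, hab, rfl⟩ := Finset.card_eq_two.mp hc
  exact h a (hs (by simp)) b (hs (by simp)) hab

set_option maxRecDepth 100000 in
set_option maxHeartbeats 4000000 in
lemma found_eq_s14 : foundT Tw = Finset.range 12 := by decide

set_option maxRecDepth 100000 in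
set_option maxHeartbeats 4000000 in
/-- there exists a 3-way 5-homogeneous (12,3,2) Steiner trade of
volume 20. -/
theorem stmt14 : ∃ T : Fin 3 → Finset (Finset ℕ), Is3Steiner 5 12 20 T := by
  refine ⟨Tw, ⟨⟨by norm_num, by decide, by decide, by decide, ?_⟩, ?_, ?_, by decide⟩⟩
  · rw [found_eq_s14]
    exact pair_red _ _ (by decide)
  · have h : ∀ (i : Fin 3), ∀ a ∈ Finset.range 12, ∀ b ∈ Finset.range 12, a ≠ b →
        ((Tw i).filter (fun b' => ({a, b} : Finset ℕ) ⊆ b')).card ≤ 1 := by decide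
    unfold IsSteinerT
    rw [found_eq_s14]
    intro i
    exact pair_red _ _ (h i)
  · unfold IsHomog; decide
end

section
/- There exists a 3-way 6-homogeneous (14,3,2) Steiner trade of volume 28. -/
set_option maxRecDepth 100000


open Finset

def myT1 : Finset (Finset ℕ) :=
  {({1,2,3} : Finset ℕ), ({1,4,5} : Finset ℕ), ({1,6,7} : Finset ℕ), ({1,8,9} : Finset ℕ), ({1,10,11} : Finset ℕ), ({1,12,13} : Finset ℕ), ({2,4,6} : Finset ℕ), ({2,5,7} : Finset ℕ), ({2,8,10} : Finset ℕ), ({2,9,11} : Finset ℕ), ({2,12,14} : Finset ℕ), ({3,4,7} : Finset ℕ), ({3,5,6} : Finset ℕ), ({3,8,11} : Finset ℕ), ({3,9,10} : Finset ℕ), ({3,13,14} : Finset ℕ), ({4,8,12} : Finset ℕ), ({4,9,13} : Finset ℕ), ({4,10,14} : Finset ℕ), ({5,8,13} : Finset ℕ), ({5,9,12} : Finset ℕ), ({5,11,14} : Finset ℕ), ({6,8,14} : Finset ℕ), ({6,10,12} : Finset ℕ), ({6,11,13} : Finset ℕ), ({7,9,14} : Finset ℕ), ({7,10,13} : Finset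 ℕ), ({7,11,12} : Finset ℕ)}

def myT2 : Finset (Finset ℕ) :=
  {({1,2,7} : Finset ℕ), ({1,3,10} : Finset ℕ), ({1,4,6} : Finset ℕ), ({1,5,12} : Finset ℕ), ({1,8,13} : Finset ℕ), ({1,9,11} : Finset ℕ), ({2,3,4} : Finset ℕ), ({2,5,9} : Finset ℕ), ({2,6,10} : Finset ℕ), ({2,8,14} : Finset ℕ), ({2,11,12} : Finset ℕ), ({3,5,14} : Finset ℕ), ({3,6,7} : Finset ℕ), ({3,8,9} : Finset ℕ), ({3,11,13} : Finset ℕ), ({4,5,8} : Finset ℕ), ({4,7,10} : Finset ℕ), ({4,9,14} : Finset ℕ), ({4,12,13} : Finset ℕ), ({5,6,13} : Finset ℕ), ({5,7,11} : Finset ℕ), ({6,8,12} : Finset ℕ), ({6,11,14} : Finset ℕ), ({7,9,12} : Finset ℕ), ({7,13,14} : Finset ℕ), ({8,10,11} : Finset ℕ), ({9,10,13} : Finset ℕ), ({10,12,14} : Finset ℕ)}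

def myT3 : Finset (Finset ℕ) :=
  {({1,2,9} : Finset ℕ), ({1,3,11} : Finset ℕ), ({1,4,12} : Finset ℕ), ({1,5,7} : Finset ℕ), ({1,6,13} : Finset ℕ), ({1,8,10} : Finset ℕ), ({2,3,7} : Finset ℕ), ({2,4,10} : Finset ℕ), ({2,5,11} : Finset ℕ), ({2,6,14} : Finset ℕ), ({2,8,12} : Finset ℕ), ({3,4,14} : Finset ℕ), ({3,5,9} : Finset ℕ), ({3,6,10} : Finset ℕ), ({3,8,13} : Finset ℕ), ({4,5,13} : Finset ℕ), ({4,6,7} : Finset ℕ), ({4,8,9} : Finset ℕ), ({5,6,12} : Finset ℕ), ({5,8,14} : Finset ℕ), ({6,8,11} : Finset ℕ), ({7,9,11} : Finset ℕ), ({7,10,14} : Finset ℕ), ({7,12,13} : Finset ℕ), ({9,10,12} : Finset ℕ), ({9,13,14} : Finset ℕ), ({10,11,13} : Finset ℕ), ({11,12,14} : Finset ℕ)}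


def myT : Fin 3 → Finset (Finset ℕ) := ![myT1, myT2, myT3]

def myV : Finset ℕ := {1,2,3,4,5,6,7,8,9,10,11,12,13,14}

lemma found_eq_s16 : foundT myT = myV := by decide

lemma pair_cond : ∀ s ∈ myV.powersetCard 2, ∀ i j : Fin 3,
    ((myT i).filter (fun b => s ⊆ b)).card =
      ((myT j).filter (fun b => s ⊆ b)).card := by decide

lemma homog_cond : ∀ x ∈ myV, ∀ i : Fin 3,
    ((myT i).filter (fun b => x ∈ b)).card = 6 := by decide

lemma steiner_cond : ∀ i : Fin 3, ∀ s ∈ myV.powersetCard 2,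
    ((myT i).filter (fun b => s ⊆ b)).card ≤ 1 := by decide

/-- there exists a 3-way 6-homogeneous (14,3,2) Steiner trade of
volume 28. -/
theorem stmt16 : ∃ T : Fin 3 → Finset (Finset ℕ), Is3Steiner 6 14 28 T := by
  refine ⟨myT, ⟨⟨by norm_num, by decide, by decide, by decide, ?_⟩, ?_, ?_, ?_⟩⟩
  · intro s hs hc i j
    rw [found_eq_s16] at hs
    exact pair_cond s (Finset.mem_powersetCard.mpr ⟨hs, hc⟩) i j
  · intro i s hs hc
    rw [found_eq_s16] at hs
    exact steiner_cond i s (Finset.mem_powersetCard.mpr ⟨hs, hc⟩)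
  · intro x hx i
    rw [found_eq_s16] at hx
    exact homog_cond x hx i
  · rw [found_eq_s16]; decide
end
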